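/- For any finite multigraph G, the quotient graph G/∼₃CC of G by the 3-edge-connectedness relation is a cactus. -/

import Mathlib

namespace TCW

/-- A multigraph: a type of vertices, a type of edges, and an incidence map
assigning to each edge its (unordered) pair of endpoints. -/
structure Multigraph (V E : Type) where
  inc : E → Sym2 V

namespace Multigraph

variable {V E : Type}

/-- The multigraph has no loops. -/
def Loopless (G : Multigraph V E) : Prop := ∀ e : E, ¬ (G.inc e).IsDiag

/-- Walks in a multigraph. -/
inductive Walk (G : Multigraph V E) : V → V → Type where
  | nil (v : V) : Walk G v v
  | cons {u v w : V} (e : E) (he : G.inc e = s(u, v)) (tail : Walk G v w) : Walk G u w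

namespace Walk

variable {G : Multigraph V E}

/-- The list of edges traversed by a walk. -/
def edges : ∀ {u v : V}, G.Walk u v → List E
  | _, _, .nil _ => []
  | _, _, .cons e _ p => e :: p.edges

/-- The list of vertices visited by a walk (in order). -/
def support : ∀ {u v : V}, G.Walk u v → List V
  | u, _, .nil _ => [u]
  | u, _, .cons _ _ p => u :: p.support

/-- A walk is a path if it visits no vertex twice. -/
def IsPath {u v : V} (p : G.Walk u v) : Prop := p.support.Nodup

/-- A closed walk is a cycle if it is nonempty, repeats no edge, and its
vertices are pairwise distinct except for the common endpoint. -/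
def IsCycle {u : V} (p : G.Walk u u) : Prop :=
  p.edges ≠ [] ∧ p.edges.Nodup ∧ p.support.tail.Nodup

end Walk

/-- Two walks are edge-disjoint if they share no edge. -/
def EdgeDisjoint {G : Multigraph V E} {u v u' v' : V}
    (p : G.Walk u v) (q : G.Walk u' v') : Prop :=
  ∀ e : E, e ∈ p.edges → e ∉ q.edges

/-- There exist three pairwise edge-disjoint paths from `u` to `v`. -/
def ThreePaths (G : Multigraph V E) (u v : V) : Prop :=
  ∃ (p₁ p₂ p₃ : G.Walk u v), p₁.IsPath ∧ p₂.IsPath ∧ p₃.IsPath ∧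
    EdgeDisjoint p₁ p₂ ∧ EdgeDisjoint p₁ p₃ ∧ EdgeDisjoint p₂ p₃

/-- `u` and `v` are 3-edge-connected: they are equal or joined by three
pairwise edge-disjoint paths. -/
def ThreeEC (G : Multigraph V E) (u v : V) : Prop := u = v ∨ ThreePaths G u v

/-- The set of edges crossing the vertex set `A` (i.e. the cut `δ(A)`). -/
def delta (G : Multigraph V E) (A : Set V) : Set E :=
  {e | ∃ x y, G.inc e = s(x, y) ∧ x ∈ A ∧ y ∉ A}

/-- The edge sets of cycles of `G`. -/
def cycleSets (G : Multigraph V E) : Set (Set E) :=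
  {C | ∃ (u : V) (p : G.Walk u u), p.IsCycle ∧ C = {e | e ∈ p.edges}}

/-- A cactus: any two distinct cycles are edge-disjoint (equivalently, every
2-connected block is a single edge or a cycle). -/
def IsCactus (G : Multigraph V E) : Prop :=
  ∀ C₁ ∈ G.cycleSets, ∀ C₂ ∈ G.cycleSets, C₁ ≠ C₂ → C₁ ∩ C₂ = ∅

/-- The quotient multigraph of `G` by a setoid on vertices: vertices are the
equivalence classes, and every edge of `G` whose endpoints lie in different
classes gives one edge; edges inside a class are discarded. -/
def quot (G : Multigraph V E) (s : Setoid V) :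
    Multigraph (Quotient s) {e : E // ¬ (Sym2.map (Quotient.mk s) (G.inc e)).IsDiag} :=
  ⟨fun e => Sym2.map (Quotient.mk s) (G.inc e.1)⟩

/-- The setoid of 3-edge-connectedness (its classes are the
3-edge-connected components). -/
def tccSetoid (G : Multigraph V E) : Setoid V := Relation.EqvGen.setoid (ThreeEC G)

/-- `H` is an immersion of `G`: vertices of `H` map injectively to vertices
of `G`, and edges of `H` map to pairwise edge-disjoint paths of `G`, the path
of an edge connecting the images of its endpoints. -/
def IsImmersion {V₁ E₁ V₂ E₂ : Type} (H : Multigraph V₁ E₁) (G : Multigraph V₂ E₂) : Prop :=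
  ∃ (f : V₁ → V₂) (P : E₁ → (u : V₂) × (v : V₂) × G.Walk u v),
    Function.Injective f ∧
    (∀ e : E₁, Sym2.map f (H.inc e) = s((P e).1, (P e).2.1)) ∧
    (∀ e : E₁, (P e).2.2.IsPath) ∧
    (∀ e₁ e₂ : E₁, e₁ ≠ e₂ → EdgeDisjoint (P e₁).2.2 (P e₂).2.2)

section Torso

variable (G : Multigraph V E) (A : Set V)

/-- Two vertices outside `A` are related if joined by a walk avoiding `A`. -/
def compRel (x y : {v : V // v ∉ A}) : Prop :=
  ∃ p : G.Walk x.1 y.1, ∀ w ∈ p.support, w ∉ A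

/-- The setoid whose classes are the connected components of `G - A`. -/
def compSetoid : Setoid {v : V // v ∉ A} := Relation.EqvGen.setoid (G.compRel A)

/-- The component `Z` of `G - A` is attached to the vertex `a ∈ A` by some edge. -/
def Attached (Z : Quotient (G.compSetoid A)) (a : {v : V // v ∈ A}) : Prop :=
  ∃ (e : E) (z : {v : V // v ∉ A}), Quotient.mk (G.compSetoid A) z = Z ∧ G.inc e = s(a.1, z.1)

/-- Edges of `G` with both endpoints in `A`, recorded together with their
endpoints as vertices of the torso. -/
def InnerE : Type :=
  {q : E × Sym2 {v : V // v ∈ A} // G.inc q.1 = Sym2.map Subtype.val q.2}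

/-- Replacement edges: one for each connected component of `G - A` having
exactly two (distinct) neighbours in `A`; its endpoints are those neighbours. -/
def RepE : Type :=
  {q : Quotient (G.compSetoid A) × Sym2 {v : V // v ∈ A} //
    ¬ q.2.IsDiag ∧ {a | a ∈ q.2} = {a | G.Attached A q.1 a}}

/-- The torso of `A` in `G`: keep the edges inside `A`, and for each
connected component of `G - A` with exactly two neighbours in `A`, add a
replacement edge between those neighbours. -/
def torso : Multigraph {v : V // v ∈ A} (G.InnerE A ⊕ G.RepE A) :=
  ⟨Sum.elim (fun q => q.1.2) (fun q => q.1.2)⟩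

end Torso

end Multigraph

open Multigraph

/-- A tree-cut decomposition of `G` with nodes `N`: a tree on `N` together
with a near-partition of the vertices of `G` into bags indexed by `N`. -/
structure TreeCutDecomp (G : Multigraph V E) (N : Type) where
  tree : SimpleGraph N
  isTree : tree.IsTree
  bag : N → Set V
  bag_disjoint : ∀ n₁ n₂ : N, n₁ ≠ n₂ → bag n₁ ∩ bag n₂ = ∅
  bag_covers : ∀ v : V, ∃ t : N, v ∈ bag t

namespace TreeCutDecomp

variable {V E N : Type} {G : Multigraph V E}

/-- The adhesion of the tree edge `n₁n₂`: all edges of `G` whose endpoints lie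
in bags of nodes in different components of the tree minus that edge. -/
def adhE (D : TreeCutDecomp G N) (n₁ n₂ : N) : Set E :=
  {e | ∃ (x y : V) (p q : N), G.inc e = s(x, y) ∧ x ∈ D.bag p ∧ y ∈ D.bag q ∧
    ¬ (D.tree.deleteEdges {s(n₁, n₂)}).Reachable p q}

/-- The adhesion of a node: the union of the adhesions of the bold
(adhesion of size at least 3) tree edges incident to it. -/
def adhN (D : TreeCutDecomp G N) (t : N) : Set E :=
  {e | ∃ n : N, D.tree.Adj n t ∧ 3 ≤ (D.adhE n t).ncard ∧ e ∈ D.adhE n t}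

/-- The decomposition has adhesion-width at most `a`. -/
def AdhWidthLE (D : TreeCutDecomp G N) (a : ℕ) : Prop := ∀ t : N, (D.adhN t).ncard ≤ a

/-- The decomposition has bag-width at most `b`. -/
def BagWidthLE (D : TreeCutDecomp G N) (b : ℕ) : Prop := ∀ t : N, (D.bag t).ncard ≤ b

/-- The adhesion-width: the maximum size of a node adhesion. -/
noncomputable def adhWidth [Fintype N] (D : TreeCutDecomp G N) : ℕ :=
  Finset.univ.sup fun t : N => (D.adhN t).ncard

/-- The bag-width: the maximum size of a bag. -/
noncomputable def bagWidth [Fintype N] (D : TreeCutDecomp G N) : ℕ :=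
  Finset.univ.sup fun t : N => (D.bag t).ncard

open Classical in
/-- GPRTW's width: the maximum over tree edges of the adhesion size, and over
nodes `t` of `|X_t|` plus the number of bold tree edges incident to `t`. -/
noncomputable def gprtwWidth [Fintype N] (D : TreeCutDecomp G N) : ℕ :=
  max
    (Finset.univ.sup fun p : N × N =>
      if D.tree.Adj p.1 p.2 then (D.adhE p.1 p.2).ncard else 0)
    (Finset.univ.sup fun t : N =>
      (D.bag t).ncard + {n : N | D.tree.Adj n t ∧ 3 ≤ (D.adhE n t).ncard}.ncard)

end TreeCutDecomp

/-- A slab in `G`: a connected subgraph (given by its vertex and edge sets)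
together with a nonempty core that is 3-edge-connected in `G`. -/
structure Slab (G : Multigraph V E) where
  verts : Set V
  edgeSet : Set E
  edge_mem : ∀ e ∈ edgeSet, ∀ x ∈ G.inc e, x ∈ verts
  conn : ∀ x ∈ verts, ∀ y ∈ verts, ∃ p : G.Walk x y,
    (∀ w ∈ p.support, w ∈ verts) ∧ (∀ e ∈ p.edges, e ∈ edgeSet)
  core : Set V
  core_sub : core ⊆ verts
  core_nonempty : core.Nonempty
  core_tec : ∀ x ∈ core, ∀ y ∈ core, ThreeEC G x y

/-- A set `F` of edges disconnects a slab if two core vertices lie in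
different components of the slab minus `F`. -/
def Slab.Disconnects {G : Multigraph V E} (F : Set E) (s : Slab G) : Prop :=
  ∃ x ∈ s.core, ∃ y ∈ s.core, ¬ ∃ p : G.Walk x y,
    (∀ w ∈ p.support, w ∈ s.verts) ∧ (∀ e ∈ p.edges, e ∈ s.edgeSet ∧ e ∉ F)

/-- A bramble: a family of pairwise touching slabs (cores pairwise intersect). -/
def IsBramble {G : Multigraph V E} (B : Set (Slab G)) : Prop :=
  ∀ s₁ ∈ B, ∀ s₂ ∈ B, (s₁.core ∩ s₂.core).Nonempty

/-- The bramble has adhesion-order at least `a`: every edge set disconnecting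
all its slabs has at least `a` edges. -/
def AdhOrderGE {G : Multigraph V E} (B : Set (Slab G)) (a : ℕ) : Prop :=
  ∀ F : Set E, (∀ s ∈ B, Slab.Disconnects F s) → a ≤ F.ncard

/-- The bramble has bag-order at least `b`: every core has at least `b` vertices. -/
def BagOrderGE {G : Multigraph V E} (B : Set (Slab G)) (b : ℕ) : Prop :=
  ∀ s ∈ B, b ≤ s.core.ncard

/-- An `(a,b)`-tangle: a consistent orientation of all edge separations of
order `< a` avoiding the collection `Σ_{a,b}` of small stars. An oriented
separation `(A, B)` is represented by its first side `A` (so `B = Aᶜ`). -/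
def IsTangle (G : Multigraph V E) (a b : ℕ) (L : Set (Set V)) : Prop :=
  (∀ A ∈ L, (G.delta A).ncard < a) ∧
  (∀ A : Set V, (G.delta A).ncard < a → (A ∈ L ↔ Aᶜ ∉ L)) ∧
  (∀ A ∈ L, ∀ C ∈ L, (Aᶜ ∩ Cᶜ).Nonempty) ∧
  (∀ σ : Set (Set V), σ ⊆ L → σ.Nonempty →
    (∀ A ∈ σ, ∀ C ∈ σ, A ≠ C → A ∩ C = ∅) →
    ¬ ((⋃ A ∈ {A ∈ σ | 3 ≤ (G.delta A).ncard}, G.delta A).ncard < a ∧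
       (⋂ A ∈ σ, Aᶜ).ncard < b))

/-!
Write `H` for the quotient. Vertices of `G` in different classes are not joined by three
edge-disjoint paths, so by Menger's theorem (via augmenting unit flows) some cut of at most two
edges separates them. Such a cut cannot split a class, so it is also a cut of `H`: any two
distinct vertices of `H` are separated by at most two edges.

If two distinct cycles of `H` shared an edge, one would contain an ear of the other: a nonempty
path between two distinct vertices `a`, `c` of the other cycle, using none of its edges. With the
two arcs of that cycle this gives three edge-disjoint walks between `a` and `c`, and
each of them crosses a small cut separating `a` from `c` in a different edge.
-/

namespace Multigraph

variable {V E : Type} {G : Multigraph V E}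

section Orientation

variable (G)

noncomputable def tail (e : E) : V := (Quot.out (G.inc e)).1

noncomputable def head (e : E) : V := (Quot.out (G.inc e)).2

lemma inc_eq_tail_head (e : E) : G.inc e = s(G.tail e, G.head e) := (Quot.out_eq _).symm

end Orientation

lemma EdgeDisjoint.symm {u v u' v' : V} {p : G.Walk u v} {q : G.Walk u' v'}
    (h : EdgeDisjoint p q) : EdgeDisjoint q p :=
  fun e hq hp => h e hp hq

namespace Walk

variable {u v w x y : V}

@[simp] lemma edges_nil : (nil u : G.Walk u u).edges = [] := rfl

@[simp] lemma edges_cons (e : E) (h : G.inc e = s(u, v)) (p : G.Walk v w) :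
    (cons e h p).edges = e :: p.edges := rfl

@[simp] lemma support_nil : (nil u : G.Walk u u).support = [u] := rfl

@[simp] lemma support_cons (e : E) (h : G.inc e = s(u, v)) (p : G.Walk v w) :
    (cons e h p).support = u :: p.support := rfl

lemma support_eq_cons (p : G.Walk u v) : p.support = u :: p.support.tail := by
  cases p <;> rfl

lemma start_mem_support (p : G.Walk u v) : u ∈ p.support := by
  rw [support_eq_cons]; exact List.mem_cons_self

lemma end_mem_support : ∀ {u : V} (p : G.Walk u v), v ∈ p.support
  | _, nil _ => List.mem_singleton_self _
  | _, cons _ _ p => List.mem_cons_of_mem _ p.end_mem_support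

lemma mem_support_of_mem_edges {e : E} :
    ∀ {u : V} (p : G.Walk u v), e ∈ p.edges → x ∈ G.inc e → x ∈ p.support
  | _, nil _, he, _ => by simp at he
  | _, cons e' h p, he, hx => by
    rcases List.mem_cons.1 he with rfl | he
    · rw [h, Sym2.mem_iff] at hx
      rcases hx with rfl | rfl
      · exact List.mem_cons_self
      · exact List.mem_cons_of_mem _ p.start_mem_support
    · exact List.mem_cons_of_mem _ (p.mem_support_of_mem_edges he hx)

def append : ∀ {u v w : V}, G.Walk u v → G.Walk v w → G.Walk u w
  | _, _, _, nil _, q => q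
  | _, _, _, cons e h p, q => cons e h (p.append q)

@[simp] lemma edges_append : ∀ {u : V} (p : G.Walk u v) (q : G.Walk v w),
    (p.append q).edges = p.edges ++ q.edges
  | _, nil _, _ => rfl
  | _, cons e _ p, q => by simp [append, p.edges_append q]

lemma support_append : ∀ {u : V} (p : G.Walk u v) (q : G.Walk v w),
    (p.append q).support = p.support ++ q.support.tail
  | _, nil _, q => q.support_eq_cons
  | _, cons e _ p, q => by simp [append, p.support_append q]

lemma exists_eq_append_of_mem_support :
    ∀ {u : V} (p : G.Walk u v), x ∈ p.support →
      ∃ (q : G.Walk u x) (r : G.Walk x v), p = q.append r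
  | _, nil _, hx => by
    obtain rfl := List.mem_singleton.1 hx
    exact ⟨nil _, nil _, rfl⟩
  | u, cons e h p, hx => by
    by_cases hxu : x = u
    · subst hxu
      exact ⟨nil _, cons e h p, rfl⟩
    · obtain ⟨q, r, rfl⟩ := p.exists_eq_append_of_mem_support
        ((List.mem_cons.1 hx).resolve_left hxu)
      exact ⟨cons e h q, r, rfl⟩

lemma exists_eq_append_cons_of_mem_edges {e : E} :
    ∀ {u : V} (p : G.Walk u v), e ∈ p.edges →
      ∃ (x y : V) (q : G.Walk u x) (h : G.inc e = s(x, y)) (r : G.Walk y v),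
        p = q.append (cons e h r)
  | _, nil _, he => by simp at he
  | _, cons e' h p, he => by
    by_cases hee : e' = e
    · subst hee
      exact ⟨_, _, nil _, h, p, rfl⟩
    · obtain ⟨x, y, q, h', r, rfl⟩ := p.exists_eq_append_cons_of_mem_edges
        ((List.mem_cons.1 he).resolve_left (Ne.symm hee))
      exact ⟨x, y, cons e' h q, h', r, rfl⟩

lemma IsPath.edges_nodup : ∀ {u : V} {p : G.Walk u v}, p.IsPath → p.edges.Nodup
  | _, nil _, _ => List.nodup_nil
  | _, cons e h p, hp => by
    rw [IsPath, support_cons, List.nodup_cons] at hp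
    refine List.nodup_cons.2 ⟨fun he => hp.1 ?_, IsPath.edges_nodup hp.2⟩
    exact p.mem_support_of_mem_edges he (h ▸ Sym2.mem_mk_left _ _)

lemma IsPath.ne_of_edges_ne_nil {p : G.Walk u v} (hp : p.IsPath) (he : p.edges ≠ []) :
    u ≠ v := by
  cases p with
  | nil => exact absurd rfl he
  | cons e h p =>
    rintro rfl
    exact (List.nodup_cons.1 hp).1 p.end_mem_support

lemma exists_mem_edges_mem_delta {S : Set V} :
    ∀ {u : V} (p : G.Walk u v), ¬(u ∈ S ↔ v ∈ S) → ∃ e ∈ p.edges, e ∈ G.delta S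
  | _, nil _, huv => absurd Iff.rfl huv
  | u, cons (v := y) e h p, huv => by
    by_cases hy : y ∈ S ↔ v ∈ S
    · refine ⟨e, List.mem_cons_self, ?_⟩
      by_cases hu : u ∈ S
      · exact ⟨u, y, h, hu, fun hy' => huv (iff_of_true hu (hy.1 hy'))⟩
      · exact ⟨y, u, h.trans Sym2.eq_swap, by tauto, hu⟩
    · obtain ⟨e', he', hδ⟩ := p.exists_mem_edges_mem_delta hy
      exact ⟨e', List.mem_cons_of_mem _ he', hδ⟩

end Walk

lemma three_le_ncard_delta_of_edgeDisjoint [Finite E] {S : Set V} {u₁ v₁ u₂ v₂ u₃ v₃ : V}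
    {p₁ : G.Walk u₁ v₁} {p₂ : G.Walk u₂ v₂} {p₃ : G.Walk u₃ v₃}
    (h₁ : ¬(u₁ ∈ S ↔ v₁ ∈ S)) (h₂ : ¬(u₂ ∈ S ↔ v₂ ∈ S)) (h₃ : ¬(u₃ ∈ S ↔ v₃ ∈ S))
    (h₁₂ : EdgeDisjoint p₁ p₂) (h₁₃ : EdgeDisjoint p₁ p₃) (h₂₃ : EdgeDisjoint p₂ p₃) :
    3 ≤ (G.delta S).ncard := by
  obtain ⟨e₁, he₁, hδ₁⟩ := p₁.exists_mem_edges_mem_delta h₁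
  obtain ⟨e₂, he₂, hδ₂⟩ := p₂.exists_mem_edges_mem_delta h₂
  obtain ⟨e₃, he₃, hδ₃⟩ := p₃.exists_mem_edges_mem_delta h₃
  refine (Set.two_lt_ncard_iff).2 ⟨e₁, e₂, e₃, hδ₁, hδ₂, hδ₃, ?_, ?_, ?_⟩
  · rintro rfl; exact h₁₂ e₁ he₁ he₂
  · rintro rfl; exact h₁₃ e₁ he₁ he₃
  · rintro rfl; exact h₂₃ e₂ he₂ he₃

lemma ThreePaths.three_le_ncard_delta [Finite E] {S : Set V} {u v : V}
    (h : G.ThreePaths u v) (huv : ¬(u ∈ S ↔ v ∈ S)) : 3 ≤ (G.delta S).ncard := by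
  obtain ⟨p₁, p₂, p₃, -, -, -, h₁₂, h₁₃, h₂₃⟩ := h
  exact three_le_ncard_delta_of_edgeDisjoint (p₁ := p₁) huv huv huv h₁₂ h₁₃ h₂₃

lemma mem_iff_mem_of_tccSetoid [Finite E] {S : Set V} (hS : (G.delta S).ncard ≤ 2) {x y : V}
    (hxy : tccSetoid G x y) : x ∈ S ↔ y ∈ S := by
  induction hxy with
  | rel x y h =>
    rcases h with rfl | h
    · rfl
    · by_contra huv
      have := h.three_le_ncard_delta huv
      omega
  | refl => rfl
  | symm _ _ _ ih => exact ih.symm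
  | trans _ _ _ _ _ ih₁ ih₂ => exact ih₁.trans ih₂

lemma ncard_delta_quot_image_le [Finite E] (s : Setoid V) {S : Set V}
    (hS : ∀ x y, s x y → x ∈ S → y ∈ S) :
    ((G.quot s).delta (Quotient.mk s '' S)).ncard ≤ (G.delta S).ncard := by
  have hmem : ∀ x, Quotient.mk s x ∈ Quotient.mk s '' S ↔ x ∈ S := fun x =>
    ⟨fun ⟨y, hy, hyx⟩ => hS y x (Quotient.exact hyx) hy, fun hx => ⟨x, hx, rfl⟩⟩
  have hsub : Subtype.val '' (G.quot s).delta (Quotient.mk s '' S) ⊆ G.delta S := by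
    rintro _ ⟨e, ⟨X, Y, hXY, hX, hY⟩, rfl⟩
    have hxy := G.inc_eq_tail_head e.1
    change Sym2.map _ (G.inc e.1) = _ at hXY
    rw [hxy, Sym2.map_mk, Sym2.eq_iff] at hXY
    rcases hXY with ⟨rfl, rfl⟩ | ⟨rfl, rfl⟩
    · exact ⟨_, _, hxy, (hmem _).1 hX, mt (hmem _).2 hY⟩
    · exact ⟨_, _, hxy.trans Sym2.eq_swap, (hmem _).1 hX, mt (hmem _).2 hY⟩
  calc _ = (Subtype.val '' (G.quot s).delta (Quotient.mk s '' S)).ncard :=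
        (Set.ncard_image_of_injective _ Subtype.val_injective).symm
    _ ≤ _ := Set.ncard_le_ncard hsub

section Menger

open scoped Classical

variable (G)

noncomputable def dartSign (x : V) (e : E) : ℤ := if x = G.tail e then 1 else -1

noncomputable def crossing (S : Set V) (e : E) : ℤ :=
  (if G.tail e ∈ S then 1 else 0) - (if G.head e ∈ S then 1 else 0)

noncomputable def flux [Fintype E] (S : Set V) (f : E → ℤ) : ℤ := ∑ e, f e * G.crossing S e

variable {G}

lemma dartSign_eq_one_or (x : V) (e : E) : G.dartSign x e = 1 ∨ G.dartSign x e = -1 := by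
  unfold dartSign; split_ifs <;> simp

@[simp] lemma dartSign_tail (e : E) : G.dartSign (G.tail e) e = 1 := if_pos rfl

lemma dartSign_head_of_ne {e : E} (h : G.head e ≠ G.tail e) : G.dartSign (G.head e) e = -1 :=
  if_neg h

lemma dartSign_mul_crossing {x y : V} {e : E} (h : G.inc e = s(x, y)) (S : Set V) :
    G.dartSign x e * G.crossing S e = (if x ∈ S then 1 else 0) - (if y ∈ S then 1 else 0) := by
  have hxy := G.inc_eq_tail_head e
  rw [h, Sym2.eq_iff] at hxy
  unfold dartSign crossing
  rcases hxy with ⟨rfl, rfl⟩ | ⟨rfl, rfl⟩ <;> split_ifs <;> simp_all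

lemma mem_delta_iff_crossing_ne_zero {S : Set V} {e : E} :
    e ∈ G.delta S ↔ G.crossing S e ≠ 0 := by
  unfold delta crossing
  simp only [Set.mem_ofPred_eq, G.inc_eq_tail_head e, Sym2.eq_iff]
  constructor
  · rintro ⟨x, y, ⟨rfl, rfl⟩ | ⟨rfl, rfl⟩, hx, hy⟩ <;> simp [hx, hy]
  · intro h
    by_cases ht : G.tail e ∈ S <;> by_cases hh : G.head e ∈ S <;> simp_all
    · exact ⟨_, _, Or.inl ⟨rfl, rfl⟩, ht, hh⟩
    · exact ⟨_, _, Or.inr ⟨rfl, rfl⟩, hh, ht⟩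

section Flux

variable [Fintype E] {S : Set V}

lemma flux_zero : G.flux S 0 = 0 := by simp [flux]

lemma flux_add (f g : E → ℤ) : G.flux S (f + g) = G.flux S f + G.flux S g := by
  simp [flux, add_mul, Finset.sum_add_distrib]

lemma flux_sub (f g : E → ℤ) : G.flux S (f - g) = G.flux S f - G.flux S g := by
  simp [flux, sub_mul, Finset.sum_sub_distrib]

lemma flux_single (e : E) (c : ℤ) : G.flux S (Pi.single e c) = c * G.crossing S e := by
  simp [flux, Pi.single_apply]

lemma flux_eq_ncard_delta {f : E → ℤ}
    (hS : ∀ x y e, x ∈ S → G.inc e = s(x, y) → f e ≠ G.dartSign x e → y ∈ S) :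
    G.flux S f = (G.delta S).ncard := by
  have hedge : ∀ e, f e * G.crossing S e = if e ∈ G.delta S then 1 else 0 := by
    intro e
    have hout : G.tail e ∈ S → G.head e ∉ S → f e = 1 := fun ht hh => by
      simpa using not_imp_comm.1 (hS _ _ e ht (G.inc_eq_tail_head e)) hh
    have hin : G.head e ∈ S → G.tail e ∉ S → f e = -1 := fun hh ht => by
      simpa [dartSign_head_of_ne fun h => ht (h ▸ hh)] using
        not_imp_comm.1 (hS _ _ e hh ((G.inc_eq_tail_head e).trans Sym2.eq_swap)) ht
    rw [mem_delta_iff_crossing_ne_zero]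
    by_cases ht : G.tail e ∈ S <;> by_cases hh : G.head e ∈ S <;> simp_all [crossing]
  rw [flux, Finset.sum_congr rfl fun e _ => hedge e, Finset.sum_boole,
    ← Set.ncard_coe_finset]
  simp

lemma flux_nonpos {f : E → ℤ} (hf : ∀ e, |f e| ≤ 1)
    (hS : ∀ x y e, x ∈ S → G.inc e = s(x, y) → f e = G.dartSign x e → y ∈ S) :
    G.flux S f ≤ 0 := by
  refine Finset.sum_nonpos fun e _ => ?_
  have hout : G.tail e ∈ S → G.head e ∉ S → f e ≠ 1 := fun ht hh h =>
    hh (hS _ _ e ht (G.inc_eq_tail_head e) (by simpa using h))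
  have hin : G.head e ∈ S → G.tail e ∉ S → f e ≠ -1 := fun hh ht h =>
    ht (hS _ _ e hh ((G.inc_eq_tail_head e).trans Sym2.eq_swap)
      (by simpa [dartSign_head_of_ne fun h => ht (h ▸ hh)] using h))
  have := abs_le.1 (hf e)
  by_cases ht : G.tail e ∈ S <;> by_cases hh : G.head e ∈ S <;> simp [crossing, ht, hh]
  · have := hout ht hh; omega
  · have := hin hh ht; omega

end Flux

namespace Walk

variable {u v w x : V}

def darts : ∀ {u v : V}, G.Walk u v → List (V × E)
  | _, _, nil _ => []
  | u, _, cons e _ p => (u, e) :: p.darts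

@[simp] lemma darts_nil : (nil u : G.Walk u u).darts = [] := rfl

@[simp] lemma darts_cons (e : E) (h : G.inc e = s(u, v)) (p : G.Walk v w) :
    (cons e h p).darts = (u, e) :: p.darts := rfl

@[simp] lemma darts_append : ∀ {u : V} (p : G.Walk u v) (q : G.Walk v w),
    (p.append q).darts = p.darts ++ q.darts
  | _, nil _, _ => rfl
  | _, cons e _ p, q => by simp [append, p.darts_append q]

lemma map_snd_darts : ∀ {u : V} (p : G.Walk u v), p.darts.map Prod.snd = p.edges
  | _, nil _ => rfl
  | _, cons e _ p => by simp [p.map_snd_darts]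

lemma exists_mem_darts_of_mem_edges {e : E} {p : G.Walk u v} (he : e ∈ p.edges) :
    ∃ x, (x, e) ∈ p.darts := by
  rw [← p.map_snd_darts, List.mem_map] at he
  obtain ⟨⟨x, e⟩, hd, rfl⟩ := he
  exact ⟨x, hd⟩

lemma exists_isPath_darts_subset : ∀ {u : V} (p : G.Walk u v),
    ∃ q : G.Walk u v, q.IsPath ∧ q.darts ⊆ p.darts
  | _, nil _ => ⟨nil _, List.nodup_singleton _, List.Subset.refl _⟩
  | u, cons e h p => by
    obtain ⟨q, hq, hqp⟩ := p.exists_isPath_darts_subset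
    by_cases hu : u ∈ q.support
    · obtain ⟨q₁, q₂, rfl⟩ := q.exists_eq_append_of_mem_support hu
      refine ⟨q₂, ?_, ?_⟩
      · have hq' := hq
        rw [IsPath, support_append, List.nodup_append] at hq'
        rw [IsPath, support_eq_cons, List.nodup_cons]
        exact ⟨fun hu' => hq'.2.2 _ q₁.end_mem_support _ hu' rfl, hq'.2.1⟩
      · intro d hd
        exact List.mem_cons_of_mem _ (hqp (by simp [hd]))
    · refine ⟨cons e h q, List.nodup_cons.2 ⟨hu, hq⟩, ?_⟩
      simpa using List.cons_subset_cons _ hqp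

noncomputable def flow : ∀ {u v : V}, G.Walk u v → E → ℤ
  | _, _, nil _ => 0
  | u, _, cons e _ p => Pi.single e (G.dartSign u e) + p.flow

lemma flow_apply_of_notMem {e : E} : ∀ {u : V} {p : G.Walk u v}, e ∉ p.edges → p.flow e = 0
  | _, nil _, _ => rfl
  | _, cons e' _ p, he => by
    rw [edges_cons, List.mem_cons, not_or] at he
    simp [flow, he.1, flow_apply_of_notMem he.2]

lemma flow_apply_of_mem_darts {e : E} : ∀ {u : V} {p : G.Walk u v}, p.edges.Nodup →
    (x, e) ∈ p.darts → p.flow e = G.dartSign x e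
  | _, nil _, _, hx => by simp at hx
  | _, cons e' _ p, hp, hx => by
    rw [edges_cons, List.nodup_cons] at hp
    rcases List.mem_cons.1 hx with hx' | hx'
    · obtain ⟨rfl, rfl⟩ := Prod.mk.inj hx'
      simp [flow, flow_apply_of_notMem hp.1]
    · have he : e ≠ e' := by
        rintro rfl
        exact hp.1 (p.map_snd_darts ▸ List.mem_map_of_mem (f := Prod.snd) hx')
      simp [flow, he, flow_apply_of_mem_darts hp.2 hx']

lemma flux_flow [Fintype E] (S : Set V) : ∀ {u : V} (p : G.Walk u v),
    G.flux S p.flow = (if u ∈ S then 1 else 0) - (if v ∈ S then 1 else 0)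
  | _, nil _ => by simp [flow, flux_zero]
  | _, cons e h p => by
    rw [flow, flux_add, flux_single, dartSign_mul_crossing h, p.flux_flow]
    ring

end Walk

variable (G)

def reachSet (R : V → E → Prop) (u : V) : Set V :=
  {x | ∃ p : G.Walk u x, ∀ d ∈ p.darts, R d.1 d.2}

variable {G}

lemma start_mem_reachSet (R : V → E → Prop) (u : V) : u ∈ G.reachSet R u :=
  ⟨.nil u, by simp⟩

lemma mem_reachSet_of_step {R : V → E → Prop} {u x y : V} {e : E} (hx : x ∈ G.reachSet R u)
    (h : G.inc e = s(x, y)) (hR : R x e) : y ∈ G.reachSet R u := by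
  obtain ⟨p, hp⟩ := hx
  refine ⟨p.append (.cons e h (.nil y)), fun d hd => ?_⟩
  simp only [Walk.darts_append, Walk.darts_cons, Walk.darts_nil, List.mem_append,
    List.mem_singleton] at hd
  rcases hd with hd | rfl
  exacts [hp d hd, hR]

lemma exists_isPath_of_mem_reachSet {R : V → E → Prop} {u v : V} (hv : v ∈ G.reachSet R u) :
    ∃ p : G.Walk u v, p.IsPath ∧ ∀ d ∈ p.darts, R d.1 d.2 := by
  obtain ⟨p, hp⟩ := hv
  obtain ⟨q, hq, hqp⟩ := p.exists_isPath_darts_subset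
  exact ⟨q, hq, fun d hd => hp d (hqp hd)⟩

section Flow

variable [Fintype E]

variable (G) in
/-- Instead of conservation at vertices, a flow is required to have flux `n` across every cut
separating `u` from `v`: this is all the augmenting-path argument uses. -/
def IsFlow (u v : V) (f : E → ℤ) (n : ℤ) : Prop :=
  (∀ e, |f e| ≤ 1) ∧ ∀ S : Set V, u ∈ S → v ∉ S → G.flux S f = n

variable {u v : V} {f : E → ℤ} {n : ℤ}

lemma IsFlow.add_flow (hf : G.IsFlow u v f n) {p : G.Walk u v} (hp : p.IsPath)
    (hres : ∀ d ∈ p.darts, f d.2 ≠ G.dartSign d.1 d.2) :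
    G.IsFlow u v (f + p.flow) (n + 1) := by
  refine ⟨fun e => ?_, fun S hu hv => ?_⟩
  · by_cases he : e ∈ p.edges
    · obtain ⟨x, hx⟩ := Walk.exists_mem_darts_of_mem_edges he
      have hne : f e ≠ G.dartSign x e := hres _ hx
      have := abs_le.1 (hf.1 e)
      rw [Pi.add_apply, p.flow_apply_of_mem_darts hp.edges_nodup hx, abs_le]
      rcases G.dartSign_eq_one_or x e with h | h <;> rw [h] at hne ⊢ <;> omega
    · rw [Pi.add_apply, Walk.flow_apply_of_notMem he, add_zero]
      exact hf.1 e
  · rw [flux_add, hf.2 S hu hv, p.flux_flow, if_pos hu, if_neg hv]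
    ring

lemma IsFlow.sub_flow (hf : G.IsFlow u v f n) {p : G.Walk u v} (hp : p.IsPath)
    (hcarry : ∀ d ∈ p.darts, f d.2 = G.dartSign d.1 d.2) :
    G.IsFlow u v (f - p.flow) (n - 1) ∧ ∀ e ∈ p.edges, (f - p.flow) e = 0 := by
  have hzero : ∀ e ∈ p.edges, (f - p.flow) e = 0 := fun e he => by
    obtain ⟨x, hx⟩ := Walk.exists_mem_darts_of_mem_edges he
    rw [Pi.sub_apply, p.flow_apply_of_mem_darts hp.edges_nodup hx, hcarry _ hx, sub_self]
  refine ⟨⟨fun e => ?_, fun S hu hv => ?_⟩, hzero⟩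
  · by_cases he : e ∈ p.edges
    · rw [hzero e he, abs_zero]
      exact zero_le_one
    · rw [Pi.sub_apply, Walk.flow_apply_of_notMem he, sub_zero]
      exact hf.1 e
  · rw [flux_sub, hf.2 S hu hv, p.flux_flow, if_pos hu, if_neg hv]
    ring

lemma exists_isFlow {k : ℕ} (hcut : ∀ S : Set V, u ∈ S → v ∉ S → k ≤ (G.delta S).ncard) :
    ∀ n ≤ k, ∃ f, G.IsFlow u v f n
  | 0, _ => ⟨0, fun e => by simp, fun S _ _ => flux_zero⟩
  | n + 1, hn => by
    obtain ⟨f, hf⟩ := exists_isFlow hcut n (by omega)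
    -- Given `|f e| ≤ 1`, a dart `(x, e)` has room for one more unit exactly when
    -- `f e ≠ G.dartSign x e`.
    set S := G.reachSet (fun x e => f e ≠ G.dartSign x e) u
    by_cases hv : v ∈ S
    · obtain ⟨p, hp, hres⟩ := exists_isPath_of_mem_reachSet hv
      exact ⟨f + p.flow, by simpa using hf.add_flow hp hres⟩
    · have hu : u ∈ S := start_mem_reachSet _ u
      have h₁ : G.flux S f = (G.delta S).ncard :=
        flux_eq_ncard_delta fun x y e hx h hR => mem_reachSet_of_step hx h hR
      have := hcut S hu hv
      have := hf.2 S hu hv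
      omega

lemma exists_edgeDisjoint_paths_of_isFlow : ∀ (n : ℕ) {f : E → ℤ}, G.IsFlow u v f n →
    ∃ P : Fin n → G.Walk u v, (∀ i, (P i).IsPath) ∧ (∀ i, ∀ e ∈ (P i).edges, f e ≠ 0) ∧
      Pairwise fun i j => EdgeDisjoint (P i) (P j)
  | 0, _, _ => ⟨Fin.elim0, fun i => Fin.elim0 i, fun i => Fin.elim0 i, fun i => Fin.elim0 i⟩
  | n + 1, f, hf => by
    set S := G.reachSet (fun x e => f e = G.dartSign x e) u
    have hv : v ∈ S := by
      by_contra hv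
      have h₁ : G.flux S f ≤ 0 :=
        flux_nonpos hf.1 fun x y e hx h hR => mem_reachSet_of_step hx h hR
      have := hf.2 S (start_mem_reachSet _ u) hv
      omega
    obtain ⟨p, hp, hcarry⟩ := exists_isPath_of_mem_reachSet hv
    obtain ⟨hf', hzero⟩ := hf.sub_flow hp hcarry
    obtain ⟨P, hP, hPf, hPdisj⟩ :=
      exists_edgeDisjoint_paths_of_isFlow n (by simpa using hf')
    have hp_f : ∀ e ∈ p.edges, f e ≠ 0 := fun e he => by
      obtain ⟨x, hx⟩ := Walk.exists_mem_darts_of_mem_edges he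
      rw [hcarry _ hx]
      rcases G.dartSign_eq_one_or x e with h | h <;> simp [h]
    have hp_P : ∀ i, EdgeDisjoint p (P i) := fun i e he heP =>
      hPf i e heP (hzero e he)
    have hP_f : ∀ i, ∀ e ∈ (P i).edges, f e ≠ 0 := fun i e he => by
      by_cases hep : e ∈ p.edges
      · exact hp_f e hep
      · simpa [Walk.flow_apply_of_notMem hep] using hPf i e he
    refine ⟨Fin.cons p P, Fin.cases hp hP, Fin.cases hp_f hP_f, ?_⟩
    intro i j hij
    induction i using Fin.cases <;> induction j using Fin.cases
    · exact absurd rfl hij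
    · exact hp_P _
    · exact (hp_P _).symm
    · exact hPdisj fun h => hij (congrArg Fin.succ h)

theorem exists_edgeDisjoint_paths (k : ℕ)
    (hcut : ∀ S : Set V, u ∈ S → v ∉ S → k ≤ (G.delta S).ncard) :
    ∃ P : Fin k → G.Walk u v,
      (∀ i, (P i).IsPath) ∧ Pairwise fun i j => EdgeDisjoint (P i) (P j) := by
  obtain ⟨f, hf⟩ := exists_isFlow hcut k le_rfl
  obtain ⟨P, hP, -, hdisj⟩ := exists_edgeDisjoint_paths_of_isFlow k hf
  exact ⟨P, hP, hdisj⟩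

end Flow

end Menger

namespace Walk

variable {u v w : V}

lemma mem_support_append_iff {x : V} (p : G.Walk u v) (q : G.Walk v w) :
    x ∈ (p.append q).support ↔ x ∈ p.support ∨ x ∈ q.support := by
  rw [support_append, List.mem_append, q.support_eq_cons, List.mem_cons]
  constructor
  · rintro (h | h)
    exacts [Or.inl h, Or.inr (Or.inr h)]
  · rintro (h | rfl | h)
    exacts [Or.inl h, Or.inl p.end_mem_support, Or.inr h]

lemma exists_edgeDisjoint_arcs {a c : V} (p : G.Walk u u) (hp : p.edges.Nodup)
    (ha : a ∈ p.support) (hc : c ∈ p.support) :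
    ∃ (A₁ : G.Walk a c) (A₂ : G.Walk c a), EdgeDisjoint A₁ A₂ ∧
      (∀ e ∈ A₁.edges, e ∈ p.edges) ∧ ∀ e ∈ A₂.edges, e ∈ p.edges := by
  obtain ⟨q, r, rfl⟩ := p.exists_eq_append_of_mem_support ha
  have hc' : c ∈ (r.append q).support := by
    rw [mem_support_append_iff] at hc ⊢
    exact hc.symm
  obtain ⟨A₁, A₂, hA⟩ := (r.append q).exists_eq_append_of_mem_support hc'
  have hedges : (A₁.edges ++ A₂.edges).Perm (q.append r).edges := by
    rw [← edges_append, ← hA, edges_append, edges_append]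
    exact List.perm_append_comm
  refine ⟨A₁, A₂, fun e h₁ h₂ => ?_, fun e he => ?_, fun e he => ?_⟩
  · exact List.disjoint_of_nodup_append (hedges.nodup_iff.2 hp) h₁ h₂
  · exact hedges.subset (List.mem_append_left _ he)
  · exact hedges.subset (List.mem_append_right _ he)

/-- The ear may start at `x` while the walk is outside `V₁`; this is what the induction needs. -/
lemma exists_ear {V₁ : Set V} {E₁ : Set E} (hE : ∀ e ∈ E₁, ∀ x ∈ G.inc e, x ∈ V₁) :
    ∀ {x z : V} (W : G.Walk x z), z ∈ V₁ → (x ∉ V₁ ∨ ∃ e ∈ W.edges, e ∉ E₁) →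
      ∃ (a c : V) (P : G.Walk a c), (a ∈ V₁ ∨ a = x) ∧ c ∈ V₁ ∧ P.edges ≠ [] ∧
        (∀ e ∈ P.edges, e ∉ E₁) ∧ P.support.Sublist W.support
  | _, _, nil _, hz, hW => by simp_all
  | x, _, cons (v := y) e h t, hz, hW => by
    have hxe : x ∈ G.inc e := h ▸ Sym2.mem_mk_left _ _
    have hye : y ∈ G.inc e := h ▸ Sym2.mem_mk_right _ _
    by_cases hy : y ∈ V₁
    · by_cases he : e ∈ E₁
      · have ht : ∃ e' ∈ t.edges, e' ∉ E₁ := by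
          rcases hW with hx | ⟨e', he', he'E⟩
          · exact absurd (hE e he x hxe) hx
          · rcases List.mem_cons.1 he' with rfl | he'
            · exact absurd he he'E
            · exact ⟨e', he', he'E⟩
        obtain ⟨a, c, P, ha, hc, hne, hP, hsub⟩ := exists_ear hE t hz (Or.inr ht)
        exact ⟨a, c, P, Or.inl (ha.elim id (· ▸ hy)), hc, hne, hP, hsub.cons _⟩
      · refine ⟨x, y, cons e h (nil y), Or.inr rfl, hy, by simp, by simpa using he, ?_⟩
        simpa using t.start_mem_support
    · obtain ⟨a, c, P, ha, hc, hne, hP, hsub⟩ := exists_ear hE t hz (Or.inl hy)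
      by_cases ha' : a ∈ V₁
      · exact ⟨a, c, P, Or.inl ha', hc, hne, hP, hsub.cons _⟩
      · obtain rfl : a = y := ha.resolve_left ha'
        refine ⟨x, c, cons e h P, Or.inr rfl, hc, by simp, ?_, by simpa using hsub⟩
        simp only [edges_cons, List.mem_cons]
        rintro e' (rfl | he')
        exacts [fun he => hy (hE _ he _ hye), hP e' he']

end Walk

lemma exists_three_edgeDisjoint_walks {u₁ u₂ : V} {p₁ : G.Walk u₁ u₁} {p₂ : G.Walk u₂ u₂}
    (h₁ : p₁.edges.Nodup) (h₂ : p₂.support.tail.Nodup) {e d : E} (he₁ : e ∈ p₁.edges)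
    (he₂ : e ∈ p₂.edges) (hd₂ : d ∈ p₂.edges) (hd₁ : d ∉ p₁.edges) :
    ∃ a c : V, a ≠ c ∧ ∃ (P A₁ : G.Walk a c) (A₂ : G.Walk c a),
      EdgeDisjoint P A₁ ∧ EdgeDisjoint P A₂ ∧ EdgeDisjoint A₁ A₂ := by
  have hE : ∀ e ∈ {e | e ∈ p₁.edges}, ∀ x ∈ G.inc e, x ∈ {x | x ∈ p₁.support} :=
    fun e he x hx => p₁.mem_support_of_mem_edges he hx
  obtain ⟨x, y, q, h, r, rfl⟩ := p₂.exists_eq_append_cons_of_mem_edges he₂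
  -- Without `e`, the second cycle is the path `r.append q` from `y` to `x`.
  have hW : (r.append q).IsPath := by
    rw [Walk.support_append, Walk.support_cons, List.tail_cons, q.support_eq_cons,
      List.cons_append, List.tail_cons] at h₂
    rw [Walk.IsPath, Walk.support_append]
    exact List.nodup_append_comm.1 h₂
  have hdW : d ∈ (r.append q).edges := by
    have hde : d ≠ e := fun hde => hd₁ (hde ▸ he₁)
    simp only [Walk.edges_append, Walk.edges_cons, List.mem_append, List.mem_cons] at hd₂ ⊢
    tauto
  have hx : x ∈ p₁.support := p₁.mem_support_of_mem_edges he₁ (h ▸ Sym2.mem_mk_left _ _)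
  have hy : y ∈ p₁.support := p₁.mem_support_of_mem_edges he₁ (h ▸ Sym2.mem_mk_right _ _)
  obtain ⟨a, c, P, ha, hc, hPne, hP, hsub⟩ :=
    Walk.exists_ear hE (r.append q) hx (Or.inr ⟨d, hdW, hd₁⟩)
  replace ha : a ∈ p₁.support := ha.elim id (· ▸ hy)
  obtain ⟨A₁, A₂, hA, hA₁, hA₂⟩ := p₁.exists_edgeDisjoint_arcs h₁ ha hc
  refine ⟨a, c, Walk.IsPath.ne_of_edges_ne_nil (p := P) (hW.sublist hsub) hPne, P, A₁, A₂,
    fun e he he' => hP e he (hA₁ e he'), fun e he he' => hP e he (hA₂ e he'), hA⟩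

variable (G) in
def IsTwoEdgeSeparated : Prop :=
  ∀ a c : V, a ≠ c → ∃ T : Set V, a ∈ T ∧ c ∉ T ∧ (G.delta T).ncard ≤ 2

lemma IsTwoEdgeSeparated.edges_subset_of_mem_edges [Finite E] (hG : G.IsTwoEdgeSeparated)
    {u₁ u₂ : V} {p₁ : G.Walk u₁ u₁} {p₂ : G.Walk u₂ u₂} (h₁ : p₁.edges.Nodup)
    (h₂ : p₂.support.tail.Nodup) {e : E} (he₁ : e ∈ p₁.edges) (he₂ : e ∈ p₂.edges) :
    p₂.edges ⊆ p₁.edges := by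
  intro d hd₂
  by_contra hd₁
  obtain ⟨a, c, hac, P, A₁, A₂, h₁₂, h₁₃, h₂₃⟩ :=
    exists_three_edgeDisjoint_walks h₁ h₂ he₁ he₂ hd₂ hd₁
  obtain ⟨T, ha, hc, hT⟩ := hG a c hac
  have hsep : ¬(a ∈ T ↔ c ∈ T) := fun h => hc (h.1 ha)
  have := three_le_ncard_delta_of_edgeDisjoint (p₁ := P) (p₂ := A₁) (p₃ := A₂) hsep hsep
    (fun h => hsep h.symm) h₁₂ h₁₃ h₂₃
  omega

lemma IsTwoEdgeSeparated.isCactus [Finite E] (hG : G.IsTwoEdgeSeparated) : G.IsCactus := by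
  rintro _ ⟨u₁, p₁, hp₁, rfl⟩ _ ⟨u₂, p₂, hp₂, rfl⟩ hne
  by_contra hmeet
  obtain ⟨e, he₁, he₂⟩ := Set.nonempty_iff_ne_empty.2 hmeet
  refine hne (Set.ext fun d => ⟨fun hd => ?_, fun hd => ?_⟩)
  · exact hG.edges_subset_of_mem_edges hp₂.2.1 hp₁.2.2 he₂ he₁ hd
  · exact hG.edges_subset_of_mem_edges hp₁.2.1 hp₂.2.2 he₁ he₂ hd

lemma exists_small_cut_of_not_tccSetoid [Finite E] {x y : V} (h : ¬tccSetoid G x y) :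
    ∃ S : Set V, x ∈ S ∧ y ∉ S ∧ (G.delta S).ncard ≤ 2 := by
  have := Fintype.ofFinite E
  by_contra! hcut
  obtain ⟨P, hP, hdisj⟩ := exists_edgeDisjoint_paths 3 fun S hx hy => hcut S hx hy
  exact h (.rel _ _ (.inr ⟨P 0, P 1, P 2, hP 0, hP 1, hP 2,
    hdisj (by decide), hdisj (by decide), hdisj (by decide)⟩))

lemma isTwoEdgeSeparated_quot_tccSetoid [Finite E] (G : Multigraph V E) :
    (G.quot (tccSetoid G)).IsTwoEdgeSeparated := by
  refine Quotient.ind₂ fun x y hxy => ?_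
  obtain ⟨S, hx, hy, hS⟩ := exists_small_cut_of_not_tccSetoid fun h => hxy (Quotient.sound h)
  have hsat : ∀ x y, tccSetoid G x y → x ∈ S → y ∈ S := fun x y h =>
    (mem_iff_mem_of_tccSetoid hS h).1
  refine ⟨Quotient.mk _ '' S, ⟨x, hx, rfl⟩, fun ⟨y', hy', hyy'⟩ => ?_,
    (ncard_delta_quot_image_le _ hsat).trans hS⟩
  exact hy (hsat y' y (Quotient.exact hyy') hy')

end Multigraph

theorem quot_tcc_isCactus_general {V E : Type} [Finite E]
    (G : Multigraph V E) :
    (G.quot (tccSetoid G)).IsCactus :=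
  (isTwoEdgeSeparated_quot_tccSetoid G).isCactus

/-- the quotient of G by the 3-edge-connectedness relation is a cactus. -/
theorem quot_tcc_isCactus {V E : Type} [Finite V] [Finite E]
    (G : Multigraph V E) (hG : G.Loopless) :
    (G.quot (tccSetoid G)).IsCactus :=
  quot_tcc_isCactus_general G

end TCW
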